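/- In S(G), for every idempotent e of G and every s in G one has ε_e · ε_s = ε_{es}, where ε_r = [r][r*]. -/

import Mathlib

universe u v

/-- An inverse semigroup: every element has a unique generalized inverse. -/
class InverseSemigroup (G : Type u) extends Semigroup G, Star G where
  mul_star_mul_self : ∀ s : G, s * star s * s = s
  star_mul_self_star : ∀ s : G, star s * s * star s = star s
  star_unique : ∀ s t : G, s * t * s = s → t * s * t = t → t = star s

variable (G : Type u) [InverseSemigroup G]

/-- The defining relations of the prefix expansion S(G). -/
inductive ExpRel : FreeSemigroup G → FreeSemigroup G → Prop
  | rel1 (s t : G) : ExpRel (.of s * .of t * .of (star t)) (.of (s * t) * .of (star t))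
  | rel2 (s t : G) : ExpRel (.of (star s) * .of s * .of t) (.of (star s) * .of (s * t))
  | rel3 (s : G) : ExpRel (.of s * .of (star s) * .of s) (.of s)

/-- The congruence generated by the defining relations. -/
def expCon : Con (FreeSemigroup G) := conGen (ExpRel G)

/-- The prefix expansion S(G) of the inverse semigroup G. -/
def SG : Type u := (expCon G).Quotient

instance : Semigroup (SG G) := Con.semigroup (expCon G)

variable {G}

/-- The canonical generator [s] of S(G). -/
def gen (s : G) : SG G := ((FreeSemigroup.of s : FreeSemigroup G) : (expCon G).Quotient)

/-- ε_s = [s][s*] in S(G). -/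
def eps (s : G) : SG G := gen s * gen (star s)

/-- ε_{s₁}⋯ε_{s_n}·x for a list [s₁,…,s_n]. -/
def epsList (l : List G) (x : SG G) : SG G := (l.map eps).foldr (· * ·) x

/-- ε_A · x for a finite set A ⊆ G. -/
noncomputable def epsSet (A : Finset G) (x : SG G) : SG G := epsList A.toList x

/-- The normal form condition on the pair (A, t). -/
def IsNormalForm (A : Finset G) (t : G) : Prop :=
  t ∈ A ∧ t * star t ∈ A ∧ ∀ a ∈ A, a * star a = t * star t

/-- A partial homomorphism from an inverse semigroup to a semigroup. -/
structure IsPartialHom {H : Type v} [Semigroup H] (π : G → H) : Prop where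
  rel1 : ∀ s t : G, π s * π t * π (star t) = π (s * t) * π (star t)
  rel2 : ∀ s t : G, π (star s) * π s * π t = π (star s) * π (s * t)
  rel3 : ∀ s : G, π s * π (star s) * π s = π s

/-- The natural partial order: x ≤ y iff x = y·e for some idempotent e. -/
def natLE {H : Type v} [Semigroup H] (x y : H) : Prop := ∃ e : H, e * e = e ∧ x = y * e

/-- A filter in an inverse semigroup. -/
def IsFilter (ξ : Set G) : Prop :=
  ξ.Nonempty ∧ ∀ e s : G, e * e = e → (e * s ∈ ξ ↔ e ∈ ξ ∧ s ∈ ξ)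

-- auxiliary
namespace ExpAux

open InverseSemigroup

lemma idm {G : Type u} [Semigroup G] {x : G} (h : x * x = x) (a : G) :
    x * (x * a) = x * a := by rw [← mul_assoc, h]

lemma star_star (s : G) : star (star s) = s :=
  (star_unique (star s) s (star_mul_self_star s) (mul_star_mul_self s)).symm

lemma star_of_idem {e : G} (he : e * e = e) : star e = e :=
  (star_unique e e (by rw [he, he]) (by rw [he, he])).symm

lemma idem_mul {a b : G} (ha : a * a = a) (hb : b * b = b) :
    (a * b) * (a * b) = a * b ∧ star (a * b) = a * b := by
  set x := star (a * b) with hx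
  have h1 : (a * b) * x * (a * b) = a * b := mul_star_mul_self (a * b)
  have h2 : x * (a * b) * x = x := star_mul_self_star (a * b)
  have hy1 : (a * b) * (b * x * a) * (a * b) = a * b := by
    calc (a * b) * (b * x * a) * (a * b) = a * (b * (b * (x * (a * (a * b))))) := by
          simp only [mul_assoc]
      _ = a * (b * (x * (a * b))) := by rw [idm hb, idm ha]
      _ = (a * b) * x * (a * b) := by simp only [mul_assoc]
      _ = a * b := h1
  have hy2 : (b * x * a) * (a * b) * (b * x * a) = b * x * a := by
    calc (b * x * a) * (a * b) * (b * x * a) = b * (x * (a * (a * (b * (b * (x * a)))))) := by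
          simp only [mul_assoc]
      _ = b * (x * (a * (b * (x * a)))) := by rw [idm ha, idm hb]
      _ = b * ((x * (a * b) * x) * a) := by simp only [mul_assoc]
      _ = b * (x * a) := by rw [h2]
      _ = b * x * a := (mul_assoc _ _ _).symm
  have hyx : b * x * a = x := star_unique (a * b) (b * x * a) hy1 hy2
  have hxx : x * x = x := by
    calc x * x = (b * x * a) * (b * x * a) := by rw [hyx]
      _ = b * (x * (a * (b * (x * a)))) := by simp only [mul_assoc]
      _ = b * ((x * (a * b) * x) * a) := by simp only [mul_assoc]
      _ = b * (x * a) := by rw [h2]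
      _ = b * x * a := (mul_assoc _ _ _).symm
      _ = x := hyx
  have hab : a * b = x := by
    calc a * b = star (star (a * b)) := (star_star _).symm
      _ = star x := by rw [← hx]
      _ = x := star_of_idem hxx
  constructor
  · rw [hab]; exact hxx
  · exact hab.symm

lemma idem_comm {e f : G} (he : e * e = e) (hf : f * f = f) : e * f = f * e := by
  obtain ⟨hef, sef⟩ := idem_mul he hf
  obtain ⟨hfe, _⟩ := idem_mul hf he
  have h1 : (e * f) * (f * e) * (e * f) = e * f := by
    calc (e * f) * (f * e) * (e * f) = e * (f * (f * (e * (e * f)))) := by simp only [mul_assoc]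
      _ = e * (f * (e * f)) := by rw [idm hf, idm he]
      _ = (e * f) * (e * f) := by simp only [mul_assoc]
      _ = e * f := hef
  have h2 : (f * e) * (e * f) * (f * e) = f * e := by
    calc (f * e) * (e * f) * (f * e) = f * (e * (e * (f * (f * e)))) := by simp only [mul_assoc]
      _ = f * (e * (f * e)) := by rw [idm he, idm hf]
      _ = (f * e) * (f * e) := by simp only [mul_assoc]
      _ = f * e := hfe
  have := star_unique (e * f) (f * e) h1 h2
  rw [sef] at this
  exact this.symm

lemma range_idem (t : G) : (t * star t) * (t * star t) = t * star t := by
  calc (t * star t) * (t * star t) = (t * star t * t) * star t := by simp only [mul_assoc]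
    _ = t * star t := by rw [mul_star_mul_self]

lemma domain_idem (s : G) : (star s * s) * (star s * s) = star s * s := by
  calc (star s * s) * (star s * s) = (star s * s * star s) * s := by simp only [mul_assoc]
    _ = star s * s := by rw [star_mul_self_star]

lemma star_mul (s t : G) : star (s * t) = star t * star s := by
  have hc := idem_comm (range_idem t) (domain_idem s)
  have hA : (s * t) * (star t * star s) * (s * t) = s * t := by
    calc (s * t) * (star t * star s) * (s * t)
        = s * ((t * star t) * (star s * s)) * t := by simp only [mul_assoc]
      _ = s * ((star s * s) * (t * star t)) * t := by rw [hc]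
      _ = (s * star s * s) * (t * star t * t) := by simp only [mul_assoc]
      _ = s * t := by rw [mul_star_mul_self, mul_star_mul_self]
  have hB : (star t * star s) * (s * t) * (star t * star s) = star t * star s := by
    calc (star t * star s) * (s * t) * (star t * star s)
        = star t * ((star s * s) * (t * star t)) * star s := by simp only [mul_assoc]
      _ = star t * ((t * star t) * (star s * s)) * star s := by rw [← hc]
      _ = (star t * t * star t) * (star s * s * star s) := by simp only [mul_assoc]
      _ = star t * star s := by rw [star_mul_self_star, star_mul_self_star]
  exact (star_unique (s * t) (star t * star s) hA hB).symm

lemma sound {a b : FreeSemigroup G} (h : ExpRel G a b) :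
    ((a : (expCon G).Quotient)) = (b : (expCon G).Quotient) :=
  (expCon G).eq.mpr (ConGen.Rel.of _ _ h)

lemma gen_mul (a b : FreeSemigroup G) :
    ((a * b : FreeSemigroup G) : (expCon G).Quotient)
      = ((a : (expCon G).Quotient) * ((b : (expCon G).Quotient)) : SG G) := rfl

lemma grel1 (s t : G) : gen s * gen t * gen (star t) = gen (s * t) * gen (star t) := by
  unfold gen
  exact sound (ExpRel.rel1 s t)

lemma grel2 (s t : G) : gen (star s) * gen s * gen t = gen (star s) * gen (s * t) := by
  unfold gen
  exact sound (ExpRel.rel2 s t)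

lemma grel3 (s : G) : gen s * gen (star s) * gen s = gen s := by
  unfold gen
  exact sound (ExpRel.rel3 s)

end ExpAux


open ExpAux InverseSemigroup in
theorem eps_idempotent_mul_eps (G : Type u) [InverseSemigroup G] (e : G) (he : e * e = e)
    (s : G) : eps e * eps s = eps (G := G) (e * s) := by
  have f0 : star e = e := star_of_idem he
  -- gen e is idempotent
  have f1 : gen e * gen e = gen e := by
    have h3 := grel3 e
    rw [f0] at h3
    have h1 := grel1 e e
    rw [f0, he] at h1
    rw [← h1, h3]
  -- G-level: (e*s) * star s = (e*s) * star (e*s)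
  have hG : (e * s) * star s = (e * s) * star (e * s) := by
    have hcom := idem_comm (range_idem s) he
    rw [ExpAux.star_mul, f0]
    calc (e * s) * star s = e * (s * star s) := by rw [mul_assoc]
      _ = e * (e * (s * star s)) := (idm he _).symm
      _ = e * ((s * star s) * e) := by rw [hcom]
      _ = (e * s) * (star s * e) := by simp only [mul_assoc]
  -- key: [es][s*] = [es][(es)*]
  have key : gen (e * s) * gen (star s) = gen (e * s) * gen (star (e * s)) := by
    have h3 := grel3 (e * s)
    have h2a := grel2 (e * s) (star s)
    have h2b := grel2 (e * s) (star (e * s))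
    calc gen (e * s) * gen (star s)
        = (gen (e * s) * gen (star (e * s)) * gen (e * s)) * gen (star s) := by rw [h3]
      _ = gen (e * s) * (gen (star (e * s)) * gen (e * s) * gen (star s)) := by
          simp only [mul_assoc]
      _ = gen (e * s) * (gen (star (e * s)) * gen ((e * s) * star s)) := by
          rw [h2a]
      _ = gen (e * s) * (gen (star (e * s)) * gen ((e * s) * star (e * s))) := by rw [hG]
      _ = gen (e * s) * (gen (star (e * s)) * gen (e * s) * gen (star (e * s))) := by
          rw [h2b]
      _ = (gen (e * s) * gen (star (e * s)) * gen (e * s)) * gen (star (e * s)) := by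
          simp only [mul_assoc]
      _ = gen (e * s) * gen (star (e * s)) := by rw [h3]
  calc eps e * eps s = gen e * gen e * (gen s * gen (star s)) := by rw [eps, eps, f0]
    _ = gen e * (gen s * gen (star s)) := by rw [f1]
    _ = gen e * gen s * gen (star s) := by rw [mul_assoc]
    _ = gen (e * s) * gen (star s) := grel1 e s
    _ = gen (e * s) * gen (star (e * s)) := key
    _ = eps (e * s) := rfl
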